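/- Let N ≥ 2 and fix an index i. Then for every ξ ∈ ℝ^d the one-step retrieval error of the Hopfield update rule satisfies ‖f(ξ) − x_i‖ ≤ 2 M (N − 1) · exp(−β (Δ_i − 2 M ‖ξ − x_i‖)). -/

import Mathlib

open scoped BigOperators RealInnerProductSpace

/-- softmax(v)_j = exp(v_j) / Σ_k exp(v_k). -/
noncomputable def softmax {N : ℕ} (v : Fin N → ℝ) : Fin N → ℝ :=
  fun j => Real.exp (v j) / ∑ k, Real.exp (v k)

/-- The Hopfield update rule f(ξ) = X softmax(β Xᵀ ξ) = Σ_i softmax(β ⟪x_i, ξ⟫)_i • x_i. -/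
noncomputable def hopfieldUpdate {d N : ℕ} (x : Fin N → EuclideanSpace ℝ (Fin d))
    (β : ℝ) (ξ : EuclideanSpace ℝ (Fin d)) : EuclideanSpace ℝ (Fin d) :=
  ∑ i, softmax (fun j => β * ⟪x j, ξ⟫) i • x i

/-!
The update is a softmax-weighted average of the patterns, so `f(ξ) - x_i` is the weighted
average of the differences `x_j - x_i`, each of norm at most `2M`. The weight of `x_j` is at
most `exp (β (⟪x_j, ξ⟫ - ⟪x_i, ξ⟫))`, and writing `ξ = x_i + (ξ - x_i)` bounds the exponent by
`-β (Δ_i - 2M ‖ξ - x_i‖)`. Summing over the `N - 1` indices `j ≠ i` gives the bound.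
-/

open Finset

section Softmax

variable {N : ℕ}

lemma softmax_nonneg (v : Fin N → ℝ) (j : Fin N) : 0 ≤ softmax v j := by
  unfold softmax
  positivity

lemma sum_softmax [Nonempty (Fin N)] (v : Fin N → ℝ) : ∑ j, softmax v j = 1 := by
  simp only [softmax, ← Finset.sum_div]
  exact div_self (sum_pos (fun k _ => Real.exp_pos (v k)) univ_nonempty).ne'

lemma softmax_le_exp_sub (v : Fin N → ℝ) (i j : Fin N) :
    softmax v j ≤ Real.exp (v j - v i) := by
  rw [Real.exp_sub]
  exact div_le_div_of_nonneg_left (Real.exp_pos _).le (Real.exp_pos _)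
    (single_le_sum (f := fun k => Real.exp (v k)) (fun k _ => (Real.exp_pos _).le) (mem_univ i))

end Softmax

lemma norm_sum_smul_sub_le {E ι : Type*} [SeminormedAddCommGroup E] [NormedSpace ℝ E]
    [Fintype ι] [DecidableEq ι] {p : ι → ℝ} (hp : ∀ j, 0 ≤ p j) (hsum : ∑ j, p j = 1)
    (x : ι → E) (i : ι) {ε C : ℝ} (hpε : ∀ j ≠ i, p j ≤ ε) (hC : ∀ j, ‖x j - x i‖ ≤ C) :
    ‖∑ j, p j • x j - x i‖ ≤ (Fintype.card ι - 1) * ε * C := by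
  have hcard : (((univ : Finset ι).erase i).card : ℝ) = Fintype.card ι - 1 := by
    rw [card_erase_of_mem (mem_univ i), card_univ, Nat.cast_sub (Fintype.card_pos_iff.mpr ⟨i⟩),
      Nat.cast_one]
  have hdiff : ∑ j, p j • x j - x i = ∑ j ∈ univ.erase i, p j • (x j - x i) := by
    rw [sum_erase univ (f := fun j => p j • (x j - x i)) (by simp)]
    simp only [smul_sub, sum_sub_distrib, ← sum_smul, hsum, one_smul]
  calc ‖∑ j, p j • x j - x i‖ ≤ ∑ j ∈ univ.erase i, ‖p j • (x j - x i)‖ :=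
        hdiff ▸ norm_sum_le _ _
    _ ≤ ∑ j ∈ univ.erase i, ε * C := by
        refine sum_le_sum fun j hj => ?_
        rw [norm_smul, Real.norm_of_nonneg (hp j)]
        have hji := ne_of_mem_erase hj
        exact mul_le_mul (hpε j hji) (hC j) (norm_nonneg _) ((hp j).trans (hpε j hji))
    _ = (Fintype.card ι - 1) * ε * C := by
        rw [sum_const, nsmul_eq_mul, hcard, mul_assoc]

section Separation

variable {F : Type*} [NormedAddCommGroup F] [InnerProductSpace ℝ F]

lemma inner_sub_inner_le (a b ξ : F) :
    ⟪b, ξ⟫ - ⟪a, ξ⟫ ≤ ⟪a, b⟫ - ⟪a, a⟫ + ‖b - a‖ * ‖ξ - a‖ := by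
  have hsplit : ⟪b, ξ⟫ - ⟪a, ξ⟫ = ⟪a, b⟫ - ⟪a, a⟫ + ⟪b - a, ξ - a⟫ := by
    simp only [inner_sub_left, inner_sub_right, real_inner_comm a b]
    ring
  rw [hsplit]
  gcongr
  exact real_inner_le_norm _ _

lemma softmax_inner_le_exp_separation {N : ℕ} (x : Fin N → F) {β C Δ : ℝ} (hβ : 0 ≤ β)
    {i j : Fin N} (hji : ‖x j - x i‖ ≤ C) (hΔ : Δ ≤ ⟪x i, x i⟫ - ⟪x i, x j⟫) (ξ : F) :
    softmax (fun k => β * ⟪x k, ξ⟫) j ≤ Real.exp (-β * (Δ - C * ‖ξ - x i‖)) := by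
  refine (softmax_le_exp_sub _ i j).trans (Real.exp_le_exp.mpr ?_)
  have hgap : ⟪x j, ξ⟫ - ⟪x i, ξ⟫ ≤ -(Δ - C * ‖ξ - x i‖) := by
    have := mul_le_mul_of_nonneg_right hji (norm_nonneg (ξ - x i))
    linarith [inner_sub_inner_le (x i) (x j) ξ]
  linarith [mul_le_mul_of_nonneg_left hgap hβ]

end Separation

theorem retrieval_error_bound_general
    {d N : ℕ} (x : Fin N → EuclideanSpace ℝ (Fin d)) (β M Δ : ℝ)
    (hβ : 0 < β)
    (hM : IsGreatest (Set.range fun i => ‖x i‖) M)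
    (i : Fin N)
    (hΔ : IsLeast {v : ℝ | ∃ j, j ≠ i ∧ v = ⟪x i, x i⟫ - ⟪x i, x j⟫} Δ)
    (ξ : EuclideanSpace ℝ (Fin d)) :
    ‖hopfieldUpdate x β ξ - x i‖
      ≤ 2 * M * ((N : ℝ) - 1) * Real.exp (-β * (Δ - 2 * M * ‖ξ - x i‖)) := by
  have hdiam : ∀ j, ‖x j - x i‖ ≤ 2 * M := fun j =>
    (norm_sub_le_of_le (hM.2 ⟨j, rfl⟩) (hM.2 ⟨i, rfl⟩)).trans_eq (two_mul M).symm
  have : Nonempty (Fin N) := ⟨i⟩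
  calc ‖hopfieldUpdate x β ξ - x i‖
      ≤ (Fintype.card (Fin N) - 1) * Real.exp (-β * (Δ - 2 * M * ‖ξ - x i‖)) * (2 * M) :=
        norm_sum_smul_sub_le (softmax_nonneg _) (sum_softmax _) x i
          (fun j hj => softmax_inner_le_exp_separation x hβ.le (hdiam j) (hΔ.2 ⟨j, hj, rfl⟩) ξ)
          hdiam
    _ = 2 * M * ((N : ℝ) - 1) * Real.exp (-β * (Δ - 2 * M * ‖ξ - x i‖)) := by
        rw [Fintype.card_fin]
        ring

/-- For N ≥ 2 and index i, for every ξ the one-step retrieval error satisfies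
‖f(ξ) − x_i‖ ≤ 2 M (N − 1) · exp(−β (Δ_i − 2 M ‖ξ − x_i‖)). -/
theorem retrieval_error_bound
    {d N : ℕ} (hN : 2 ≤ N) (x : Fin N → EuclideanSpace ℝ (Fin d)) (β M Δ : ℝ)
    (hβ : 0 < β)
    (hM : IsGreatest (Set.range fun i => ‖x i‖) M)
    (i : Fin N)
    (hΔ : IsLeast {v : ℝ | ∃ j, j ≠ i ∧ v = ⟪x i, x i⟫ - ⟪x i, x j⟫} Δ)
    (ξ : EuclideanSpace ℝ (Fin d)) :
    ‖hopfieldUpdate x β ξ - x i‖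
      ≤ 2 * M * ((N : ℝ) - 1) * Real.exp (-β * (Δ - 2 * M * ‖ξ - x i‖)) :=
  retrieval_error_bound_general x β M Δ hβ hM i hΔ ξ
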